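/- arXiv:1804.00906 — 2 statements merged into one kernel-verified Lean document; each statement's English description precedes it below -/
import Mathlib

section
/- For α ∈ (0,1), the function f(λ) = λ(1−λ)/(1−αλ) on the interval [0,1) is concave. -/
/-!
Partial fractions give `λ(1 - λ)/(1 - αλ) = λ/α + c - c/(1 - αλ)` with `c = (1 - α)/α² ≥ 0`:
an affine function minus a nonnegative multiple of the reciprocal of a positive affine function,
which is convex.
-/

open Set

lemma convexOn_inv {𝕜 : Type*} [Field 𝕜] [LinearOrder 𝕜] [IsStrictOrderedRing 𝕜] :
    ConvexOn 𝕜 (Ioi 0) fun x : 𝕜 ↦ x⁻¹ := by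
  simpa only [zpow_neg_one] using convexOn_zpow (𝕜 := 𝕜) (-1)

lemma convexOn_inv_affine {𝕜 : Type*} [Field 𝕜] [LinearOrder 𝕜] [IsStrictOrderedRing 𝕜]
    (a b : 𝕜) : ConvexOn 𝕜 {x | 0 < a + b * x} fun x ↦ (a + b * x)⁻¹ := by
  have h := convexOn_inv.comp_affineMap (AffineMap.lineMap a (a + b))
  convert h using 1 <;> ext x <;> simp [AffineMap.lineMap_apply_ring', mul_comm, add_comm]

lemma mul_one_sub_div_one_sub_mul_eq {α l : ℝ} (hα : α ≠ 0) (hl : 1 - α * l ≠ 0) :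
    l * (1 - l) / (1 - α * l) = l / α + (1 - α) / α ^ 2 - (1 - α) / α ^ 2 * (1 - α * l)⁻¹ := by
  rw [mul_comm α l] at hl ⊢
  field_simp
  ring

/-- For α ∈ (0,1), the function f(λ) = λ(1−λ)/(1−αλ) on [0,1) is concave. -/
theorem stmt_0 (α : ℝ) (hα : α ∈ Set.Ioo (0:ℝ) 1) :
    ConcaveOn ℝ (Set.Ico (0:ℝ) 1) (fun l : ℝ => l * (1 - l) / (1 - α * l)) := by
  obtain ⟨hα0, hα1⟩ := hα
  have hpos : ∀ l ∈ Ico (0:ℝ) 1, 0 < 1 + -α * l := fun l hl ↦ by nlinarith [hl.1, hl.2]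
  have hinv : ConvexOn ℝ (Ico 0 1) fun l : ℝ ↦ (1 - α * l)⁻¹ := by
    simpa only [neg_mul, ← sub_eq_add_neg] using
      (convexOn_inv_affine (1 : ℝ) (-α)).subset hpos (convex_Ico 0 1)
  have haffine : ConcaveOn ℝ (Ico 0 1) fun l : ℝ ↦ l / α + (1 - α) / α ^ 2 :=
    (((LinearMap.mulRight ℝ α⁻¹).concaveOn (convex_Ico 0 1)).add_const ((1 - α) / α ^ 2)).congr
      fun l _ ↦ by simp [div_eq_mul_inv]
  refine (haffine.sub (hinv.smul (by positivity : 0 ≤ (1 - α) / α ^ 2))).congr fun l hl ↦ ?_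
  exact (mul_one_sub_div_one_sub_mul_eq hα0.ne' (by linarith [hpos l hl])).symm
end

section
/- Fix λ ∈ (0,1) and κ > 0, and define the M/GI/1 capacity C(S) = λ·(1−λ)κ/(κ − λ(1 − E[e^{−κS}])) for a nonnegative service variable S with E[S]=1. Then for any such S, C(S) ≤ C(1) where C(1) = λ(1−λ)κ/(κ − λ(1 − e^{−κ})) corresponds to deterministic unit service time. -/
open MeasureTheory

/-- For λ ∈ (0,1), κ > 0, and any nonnegative S with E[S] = 1, the M/GI/1 capacity
C(S) = λ(1−λ)κ/(κ − λ(1 − E[e^{−κS}])) satisfies C(S) ≤ C(1), where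
C(1) = λ(1−λ)κ/(κ − λ(1 − e^{−κ})) is the deterministic unit-service capacity. -/
theorem stmt_16 {Ω : Type*} [MeasureSpace Ω] (μ : Measure Ω) [IsProbabilityMeasure μ]
    (S : Ω → ℝ) (hSmeas : Measurable S) (hSnn : ∀ ω, 0 ≤ S ω)
    (hSint : Integrable S μ) (hmean : ∫ ω, S ω ∂μ = 1)
    (l κ : ℝ) (hl : l ∈ Set.Ioo (0:ℝ) 1) (hκ : 0 < κ) :
    l * (1 - l) * κ / (κ - l * (1 - ∫ ω, Real.exp (-(κ * S ω)) ∂μ)) ≤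
      l * (1 - l) * κ / (κ - l * (1 - Real.exp (-κ))) := by
  obtain ⟨hl0, hl1⟩ := hl
  -- integrability of the exponential (bounded by 1)
  have hintf : Integrable (fun ω => Real.exp (-(κ * S ω))) μ := by
    apply Integrable.mono' (integrable_const (1:ℝ))
      ((hSmeas.const_mul κ).neg.exp.aestronglyMeasurable)
    filter_upwards with ω
    rw [Real.norm_eq_abs, abs_of_pos (Real.exp_pos _)]
    exact Real.exp_le_one_iff.2 (neg_nonpos.2 (mul_nonneg hκ.le (hSnn ω)))
  -- Jensen via e^x ≥ 1 + x : E[e^{-κS}] ≥ e^{-κ}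
  have hJ : Real.exp (-κ) ≤ ∫ ω, Real.exp (-(κ * S ω)) ∂μ := by
    have hle : ∀ ω, Real.exp (-κ) * (1 + (κ - κ * S ω)) ≤ Real.exp (-(κ * S ω)) := by
      intro ω
      calc Real.exp (-κ) * (1 + (κ - κ * S ω))
          ≤ Real.exp (-κ) * Real.exp (κ - κ * S ω) := by
            exact mul_le_mul_of_nonneg_left (by linarith [Real.add_one_le_exp (κ - κ * S ω)])
              (Real.exp_pos _).le
        _ = Real.exp (-(κ * S ω)) := by rw [← Real.exp_add]; ring_nf
    have hint1 : Integrable (fun ω => Real.exp (-κ) * (1 + (κ - κ * S ω))) μ := by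
      apply Integrable.const_mul
      exact (integrable_const (1 + κ)).sub (hSint.const_mul κ) |>.congr
        (Filter.Eventually.of_forall fun ω => by simp [Pi.sub_apply]; ring)
    have := integral_mono hint1 hintf hle
    calc Real.exp (-κ) = ∫ ω, Real.exp (-κ) * (1 + (κ - κ * S ω)) ∂μ := by
          rw [integral_const_mul]
          have : (fun ω => 1 + (κ - κ * S ω)) = fun ω => (1 + κ) - κ * S ω := by
            funext ω; ring
          rw [this, integral_sub (integrable_const _) (hSint.const_mul κ),
            integral_const, integral_const_mul, hmean]
          simp
      _ ≤ _ := this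
  -- denominators
  have hexpκ : 1 - Real.exp (-κ) < κ := by
    have := Real.add_one_lt_exp (x := -κ) (by linarith)
    linarith
  have hden1 : 0 < κ - l * (1 - Real.exp (-κ)) := by
    have h0 : 0 ≤ 1 - Real.exp (-κ) := by
      have : Real.exp (-κ) ≤ 1 := Real.exp_le_one_iff.2 (by linarith)
      linarith
    nlinarith
  have hnum : 0 ≤ l * (1 - l) * κ :=
    mul_nonneg (mul_nonneg hl0.le (by linarith)) hκ.le
  apply div_le_div_of_nonneg_left hnum hden1
  nlinarith
end
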